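/- arXiv:1512.07691 — 2 statements merged into one kernel-verified Lean document; each statement's English description precedes it below -/
import Mathlib

section
/- Let μ be a Borel measure on (0,∞) with ∫_{(0,∞)} min(x, x²) μ(dx) < ∞, γ ≥ 0, ψ₀(θ) = γ²θ² + ∫_{(0,∞)} (e^{−θx} − 1 + θx) μ(dx), and Φ(θ) = ψ₀(θ)/θ for θ > 0. Then for every λ > 0, the following equalities hold as (possibly infinite) values in [0,∞]: ∫_0^∞ Φ(λ e^{−y}) dy = ∫_0^λ Φ(θ)/θ dθ = γ²λ + ∫_{(0,∞)} x · g(λx) μ(dx), where g(x) = ∫_0^x (e^{−y} − 1 + y)/y² dy for x ≥ 0. -/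
/-!
The substitution θ = λe^{-y} has dθ/θ = -dy, which gives the first equality. For the second,
Φ(θ)/θ = γ² + ∫ (e^{-θx} - 1 + θx)/θ² μ(dx); since e^{-t} - 1 + t ≤ min(t, t²), this integrand is
μ-integrable, and μ restricted to (0, ∞) is s-finite because it integrates the positive function
min(x, x²). Tonelli then exchanges the θ- and x-integrals, and the scaling y = θx turns the inner
integral ∫_0^λ (e^{-θx} - 1 + θx)/θ² dθ into x g(λx).
-/

open Real MeasureTheory Set
open scoped ENNReal

theorem exp_neg_sub_one_add_nonneg (t : ℝ) : 0 ≤ exp (-t) - 1 + t := by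
  linarith [add_one_le_exp (-t)]

theorem exp_neg_sub_one_add_le_min {t : ℝ} (ht : 0 ≤ t) :
    exp (-t) - 1 + t ≤ min t (t ^ 2) := by
  have hexp : exp (-t) ≤ 1 := exp_le_one_iff.2 (neg_nonpos.2 ht)
  refine le_min (by linarith) ?_
  rcases le_total t 1 with h | h
  · have hquad := abs_exp_sub_one_sub_id_le (x := -t) (by rwa [abs_neg, abs_of_nonneg ht])
    linarith [(abs_le.1 hquad).2, neg_sq t]
  · nlinarith

theorem min_mul_sq_le {a x : ℝ} (ha : 0 ≤ a) (hx : 0 ≤ x) :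
    min (a * x) ((a * x) ^ 2) ≤ (a + a ^ 2) * min x (x ^ 2) := by
  rcases le_total x 1 with h | h
  · rw [min_eq_right (by nlinarith : x ^ 2 ≤ x)]
    exact (min_le_right _ _).trans (by nlinarith)
  · rw [min_eq_left (by nlinarith : x ≤ x ^ 2)]
    exact (min_le_left _ _).trans (by nlinarith)

theorem MeasureTheory.Integrable.sFinite_of_ae_pos {α : Type*} [MeasurableSpace α]
    {μ : Measure α} {f : α → ℝ} (hf : Integrable f μ) (hpos : ∀ᵐ x ∂μ, 0 < f x) :
    SFinite μ :=
  have := isFiniteMeasure_withDensity_ofReal hf.hasFiniteIntegral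
  sFinite_of_absolutelyContinuous <| withDensity_absolutelyContinuous'
    hf.aemeasurable.ennreal_ofReal (hpos.mono fun _ hx => by simpa using hx)

theorem image_mul_exp_neg_Ioi {lam : ℝ} (hlam : 0 < lam) :
    (fun y => lam * exp (-y)) '' Ioi 0 = Ioo 0 lam := by
  have : (fun y => lam * exp (-y)) = (lam * ·) ∘ exp ∘ Neg.neg := rfl
  rw [this, image_comp, image_comp, image_neg_Ioi, image_exp_Iio, image_mul_left_Ioo hlam]
  simp

theorem lintegral_Ioi_comp_mul_exp_neg (f : ℝ → ℝ≥0∞) {lam : ℝ} (hlam : 0 < lam) :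
    ∫⁻ y in Ioi 0, f (lam * exp (-y)) = ∫⁻ θ in Ioc 0 lam, ENNReal.ofReal θ⁻¹ * f θ := by
  have hderiv : ∀ y ∈ Ioi (0 : ℝ),
      HasDerivWithinAt (fun y => lam * exp (-y)) (-(lam * exp (-y))) (Ioi 0) y := fun y _ =>
    (((hasDerivAt_neg' y).exp.const_mul lam).congr_deriv (by ring)).hasDerivWithinAt
  have hinj : InjOn (fun y => lam * exp (-y)) (Ioi 0) :=
    fun a _ b _ h => by simpa [hlam.ne'] using h
  rw [← setLIntegral_congr Ioo_ae_eq_Ioc, ← image_mul_exp_neg_Ioi hlam,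
    lintegral_image_eq_lintegral_abs_deriv_mul measurableSet_Ioi hderiv hinj]
  refine setLIntegral_congr_fun measurableSet_Ioi fun y _ => ?_
  have hpos : 0 < lam * exp (-y) := by positivity
  rw [abs_neg, abs_of_pos hpos, ← mul_assoc, ← ENNReal.ofReal_mul hpos.le,
    mul_inv_cancel₀ hpos.ne', ENNReal.ofReal_one, one_mul]

theorem integrableOn_exp_neg_mul_sub_one_add {μ : Measure ℝ}
    (hμ : IntegrableOn (fun x => min x (x ^ 2)) (Ioi 0) μ) {θ : ℝ} (hθ : 0 ≤ θ) :
    IntegrableOn (fun x => exp (-θ * x) - 1 + θ * x) (Ioi 0) μ := by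
  refine (hμ.const_mul (θ + θ ^ 2)).mono' (by fun_prop) ?_
  refine (ae_restrict_iff' measurableSet_Ioi).2 (Filter.Eventually.of_forall fun x hx => ?_)
  rw [neg_mul, norm_of_nonneg (exp_neg_sub_one_add_nonneg _)]
  exact (exp_neg_sub_one_add_le_min (mul_nonneg hθ hx.le)).trans (min_mul_sq_le hθ hx.le)

theorem ofReal_div_sq_eq_add_lintegral {μ : Measure ℝ} (γ : ℝ)
    (hμ : IntegrableOn (fun x => min x (x ^ 2)) (Ioi 0) μ) {θ : ℝ} (hθ : 0 < θ) :
    ENNReal.ofReal ((γ ^ 2 * θ ^ 2 + ∫ x in Ioi 0, (exp (-θ * x) - 1 + θ * x) ∂μ) / θ ^ 2) =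
      ENNReal.ofReal (γ ^ 2) +
        ∫⁻ x in Ioi 0, ENNReal.ofReal ((exp (-θ * x) - 1 + θ * x) / θ ^ 2) ∂μ := by
  have hnonneg : ∀ x, 0 ≤ (exp (-θ * x) - 1 + θ * x) / θ ^ 2 := fun x =>
    div_nonneg (by simpa only [neg_mul] using exp_neg_sub_one_add_nonneg (θ * x)) (sq_nonneg θ)
  rw [add_div, mul_div_cancel_right₀ _ (by positivity), ← integral_div,
    ENNReal.ofReal_add (sq_nonneg γ) (integral_nonneg hnonneg),
    ofReal_integral_eq_lintegral_ofReal
      ((integrableOn_exp_neg_mul_sub_one_add hμ hθ.le).div_const _)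
      (Filter.Eventually.of_forall hnonneg)]

theorem intervalIntegral_exp_neg_mul_div_sq {x : ℝ} (hx : x ≠ 0) (lam : ℝ) :
    ∫ θ in 0..lam, (exp (-θ * x) - 1 + θ * x) / θ ^ 2 =
      x * ∫ y in 0..lam * x, (exp (-y) - 1 + y) / y ^ 2 := by
  have hscale : ∀ θ, (exp (-θ * x) - 1 + θ * x) / θ ^ 2 =
      x ^ 2 * ((exp (-(x * θ)) - 1 + x * θ) / (x * θ) ^ 2) := by
    intro θ
    rcases eq_or_ne θ 0 with rfl | hθ
    · simp
    · rw [neg_mul, mul_comm θ x]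
      field_simp
  simp_rw [hscale]
  rw [intervalIntegral.integral_const_mul,
    intervalIntegral.integral_comp_mul_left (fun y => (exp (-y) - 1 + y) / y ^ 2) hx,
    mul_zero, mul_comm x lam, smul_eq_mul]
  field_simp

theorem lintegral_Ioc_exp_neg_mul_div_sq {x lam : ℝ} (hx : 0 < x) (hlam : 0 ≤ lam) :
    ∫⁻ θ in Ioc 0 lam, ENNReal.ofReal ((exp (-θ * x) - 1 + θ * x) / θ ^ 2) =
      ENNReal.ofReal (x * ∫ y in 0..lam * x, (exp (-y) - 1 + y) / y ^ 2) := by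
  have hnonneg : ∀ θ, 0 ≤ (exp (-θ * x) - 1 + θ * x) / θ ^ 2 := fun θ =>
    div_nonneg (by simpa only [neg_mul] using exp_neg_sub_one_add_nonneg (θ * x)) (sq_nonneg θ)
  have hbound : ∀ θ ∈ Ioc 0 lam, (exp (-θ * x) - 1 + θ * x) / θ ^ 2 ≤ x ^ 2 := by
    rintro θ ⟨hθ, -⟩
    rw [div_le_iff₀ (by positivity), neg_mul, ← mul_pow, mul_comm x]
    exact (exp_neg_sub_one_add_le_min (by positivity)).trans (min_le_right _ _)
  have hint : IntegrableOn (fun θ => (exp (-θ * x) - 1 + θ * x) / θ ^ 2) (Ioc 0 lam) :=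
    Measure.integrableOn_of_bounded measure_Ioc_lt_top.ne
      (by fun_prop : Measurable _).aestronglyMeasurable
      ((ae_restrict_iff' measurableSet_Ioc).2 (Filter.Eventually.of_forall fun θ hθ => by
        rw [norm_of_nonneg (hnonneg θ)]; exact hbound θ hθ))
  rw [← intervalIntegral_exp_neg_mul_div_sq hx.ne', intervalIntegral.integral_of_le hlam,
    ofReal_integral_eq_lintegral_ofReal hint (Filter.Eventually.of_forall hnonneg)]

theorem stmt_13_general (μ : Measure ℝ) (γ : ℝ)
    (hμ : IntegrableOn (fun x => min x (x ^ 2)) (Set.Ioi 0) μ)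
    (ψ₀ Φ g : ℝ → ℝ)
    (hψ : ∀ θ, ψ₀ θ = γ ^ 2 * θ ^ 2 +
      ∫ x in Set.Ioi (0:ℝ), (Real.exp (-θ * x) - 1 + θ * x) ∂μ)
    (hΦ : ∀ θ > (0:ℝ), Φ θ = ψ₀ θ / θ)
    (hg : ∀ x, g x = ∫ y in (0:ℝ)..x, (Real.exp (-y) - 1 + y) / y ^ 2) :
    ∀ lam > (0:ℝ),
      (∫⁻ y in Set.Ioi (0:ℝ), ENNReal.ofReal (Φ (lam * Real.exp (-y)))) =
        (∫⁻ θ in Set.Ioc (0:ℝ) lam, ENNReal.ofReal (Φ θ / θ)) ∧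
      (∫⁻ θ in Set.Ioc (0:ℝ) lam, ENNReal.ofReal (Φ θ / θ)) =
        ENNReal.ofReal (γ ^ 2 * lam) +
          ∫⁻ x in Set.Ioi (0:ℝ), ENNReal.ofReal (x * g (lam * x)) ∂μ := by
  intro lam hlam
  have hΦθ : ∀ θ ∈ Ioc 0 lam, ENNReal.ofReal (Φ θ / θ) = ENNReal.ofReal (γ ^ 2) +
      ∫⁻ x in Ioi 0, ENNReal.ofReal ((exp (-θ * x) - 1 + θ * x) / θ ^ 2) ∂μ := by
    rintro θ ⟨hθ, -⟩
    rw [hΦ θ hθ, hψ θ, div_div, ← sq, ofReal_div_sq_eq_add_lintegral γ hμ hθ]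
  have : SFinite (μ.restrict (Ioi 0)) := hμ.sFinite_of_ae_pos <|
    (ae_restrict_iff' measurableSet_Ioi).2 (Filter.Eventually.of_forall fun x hx =>
      lt_min hx (pow_pos hx 2))
  constructor
  · rw [lintegral_Ioi_comp_mul_exp_neg (fun θ => ENNReal.ofReal (Φ θ)) hlam]
    refine setLIntegral_congr_fun measurableSet_Ioc fun θ hθ => ?_
    rw [← ENNReal.ofReal_mul (inv_nonneg.2 hθ.1.le), inv_mul_eq_div]
  · rw [setLIntegral_congr_fun measurableSet_Ioc hΦθ, lintegral_add_left measurable_const,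
      setLIntegral_const, lintegral_lintegral_swap (by fun_prop), Real.volume_Ioc, sub_zero,
      ← ENNReal.ofReal_mul (sq_nonneg γ)]
    congr 1
    refine setLIntegral_congr_fun measurableSet_Ioi fun x hx => ?_
    rw [lintegral_Ioc_exp_neg_mul_div_sq hx hlam.le, hg]

theorem stmt_13 (μ : Measure ℝ) (γ : ℝ) (hγ : 0 ≤ γ)
    (hμ : IntegrableOn (fun x => min x (x ^ 2)) (Set.Ioi 0) μ)
    (ψ₀ Φ g : ℝ → ℝ)
    (hψ : ∀ θ, ψ₀ θ = γ ^ 2 * θ ^ 2 +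
      ∫ x in Set.Ioi (0:ℝ), (Real.exp (-θ * x) - 1 + θ * x) ∂μ)
    (hΦ : ∀ θ > (0:ℝ), Φ θ = ψ₀ θ / θ)
    (hg : ∀ x, g x = ∫ y in (0:ℝ)..x, (Real.exp (-y) - 1 + y) / y ^ 2) :
    ∀ lam > (0:ℝ),
      (∫⁻ y in Set.Ioi (0:ℝ), ENNReal.ofReal (Φ (lam * Real.exp (-y)))) =
        (∫⁻ θ in Set.Ioc (0:ℝ) lam, ENNReal.ofReal (Φ θ / θ)) ∧
      (∫⁻ θ in Set.Ioc (0:ℝ) lam, ENNReal.ofReal (Φ θ / θ)) =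
        ENNReal.ofReal (γ ^ 2 * lam) +
          ∫⁻ x in Set.Ioi (0:ℝ), ENNReal.ofReal (x * g (lam * x)) ∂μ :=
  stmt_13_general μ γ hμ ψ₀ Φ g hψ hΦ hg
end

section
/- Let μ be a Borel measure on (0,∞) with ∫_{(0,∞)} min(x, x²) μ(dx) < ∞, γ ≥ 0, and ψ₀(θ) = γ²θ² + ∫_{(0,∞)} (e^{−θx} − 1 + θx) μ(dx). Then for every λ > 0, one has ∫_0^λ ψ₀(θ)/θ² dθ < ∞ if and only if ∫_{(1,∞)} x log x μ(dx) < ∞. -/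
/-!
Write `φ(u) = e^{-u} - 1 + u`. Integrability of the positive function `min(x, x²)` makes `μ`
σ-finite on `(0, ∞)`, so Tonelli gives `∫_0^λ ψ₀(θ)/θ² dθ = γ²λ + ∫ F(x) μ(dx)` with
`F(x) = ∫_0^λ φ(θx)/θ² dθ`. From `φ(u) ≤ min(u, u²)` and `φ(u) ≥ u/2` for `u ≥ 2`, splitting the
`θ`-integral at `1/x` (resp. `2/x`) yields `F(x) ≤ x log⁺ x + C min(x, x²)` and
`x log⁺ x ≤ 2 F(x) + C min(x, x²)`, and the error term is `μ`-integrable.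
-/

open Real MeasureTheory Set
open scoped ENNReal

theorem MeasureTheory.Integrable.sigmaFinite_of_ae_ne_zero {α E : Type*} [MeasurableSpace α]
    [NormedAddCommGroup E] {μ : Measure α} {f : α → E} (hf : Integrable f μ)
    (hf₀ : ∀ᵐ x ∂μ, f x ≠ 0) : SigmaFinite μ := by
  refine ⟨⟨⟨fun n => {x | 1 / (n + 1 : ℝ) ≤ ‖f x‖} ∪ {x | f x = 0}, fun _ => trivial,
    fun n => ?_, ?_⟩⟩⟩
  · have hzero : μ {x | f x = 0} = 0 := by simpa only [ae_iff, not_not] using hf₀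
    refine (measure_union_le _ _).trans_lt ?_
    rw [hzero, add_zero]
    exact hf.measure_norm_ge_lt_top (by positivity)
  · refine eq_univ_of_forall fun x => mem_iUnion.2 ?_
    by_cases hx : f x = 0
    · exact ⟨0, Or.inr hx⟩
    · obtain ⟨n, hn⟩ := exists_nat_one_div_lt (norm_pos_iff.2 hx)
      exact ⟨n, Or.inl hn.le⟩

theorem MeasureTheory.lintegral_lt_top_iff_of_le_add {α : Type*} [MeasurableSpace α]
    {μ : Measure α} {f g h : α → ℝ≥0∞} {c : ℝ≥0∞} (hc : c ≠ ∞) (hh : AEMeasurable h μ)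
    (hh_lt : ∫⁻ x, h x ∂μ < ∞) (hfg : ∀ᵐ x ∂μ, f x ≤ g x + h x)
    (hgf : ∀ᵐ x ∂μ, g x ≤ c * f x + h x) :
    ∫⁻ x, f x ∂μ < ∞ ↔ ∫⁻ x, g x ∂μ < ∞ := by
  constructor
  · intro hf
    calc ∫⁻ x, g x ∂μ ≤ ∫⁻ x, c * f x + h x ∂μ := lintegral_mono_ae hgf
      _ = c * ∫⁻ x, f x ∂μ + ∫⁻ x, h x ∂μ := by
        rw [lintegral_add_right' _ hh, lintegral_const_mul' _ _ hc]
      _ < ∞ := ENNReal.add_lt_top.2 ⟨ENNReal.mul_lt_top hc.lt_top hf, hh_lt⟩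
  · intro hg
    calc ∫⁻ x, f x ∂μ ≤ ∫⁻ x, g x + h x ∂μ := lintegral_mono_ae hfg
      _ = ∫⁻ x, g x ∂μ + ∫⁻ x, h x ∂μ := lintegral_add_right' _ hh
      _ < ∞ := ENNReal.add_lt_top.2 ⟨hg, hh_lt⟩

theorem setLIntegral_Ioc_ofReal_div {a b c : ℝ} (ha : 0 < a) (hab : a ≤ b) (hc : 0 ≤ c) :
    ∫⁻ θ in Ioc a b, ENNReal.ofReal (c / θ) = ENNReal.ofReal (c * log (b / a)) := by
  have hpos : ∀ θ ∈ Icc a b, 0 < θ := fun θ hθ => ha.trans_le hθ.1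
  have hint : IntegrableOn (fun θ => c / θ) (Ioc a b) :=
    (continuousOn_const.div continuousOn_id fun θ hθ => (hpos θ hθ).ne').integrableOn_Icc
      |>.mono_set Ioc_subset_Icc_self
  rw [← ofReal_integral_eq_lintegral_ofReal hint, ← intervalIntegral.integral_of_le hab]
  · simp_rw [div_eq_mul_inv c]
    rw [intervalIntegral.integral_const_mul, integral_inv_of_pos ha (ha.trans_le hab)]
  · exact ae_restrict_of_forall_mem measurableSet_Ioc fun θ hθ =>
      div_nonneg hc (hpos θ (Ioc_subset_Icc_self hθ)).le

noncomputable def compensatedExp (u : ℝ) : ℝ := exp (-u) - 1 + u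

theorem continuous_compensatedExp : Continuous compensatedExp := by
  unfold compensatedExp; fun_prop

theorem compensatedExp_nonneg (u : ℝ) : 0 ≤ compensatedExp u := by
  have := add_one_le_exp (-u)
  unfold compensatedExp; linarith

theorem compensatedExp_le_self {u : ℝ} (hu : 0 ≤ u) : compensatedExp u ≤ u := by
  have := exp_le_one_iff.2 (neg_nonpos.2 hu)
  unfold compensatedExp; linarith

theorem compensatedExp_le_sq {u : ℝ} (hu : 0 ≤ u) : compensatedExp u ≤ u ^ 2 := by
  rcases le_total u 1 with h1 | h1
  · have := (abs_le.1 (abs_exp_sub_one_sub_id_le (x := -u)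
      (by rwa [abs_neg, abs_of_nonneg hu]))).2
    unfold compensatedExp; nlinarith
  · exact (compensatedExp_le_self hu).trans (by nlinarith)

theorem half_le_compensatedExp {u : ℝ} (hu : 2 ≤ u) : u / 2 ≤ compensatedExp u := by
  have := exp_pos (-u)
  unfold compensatedExp; linarith

theorem compensatedExp_mul_le_max_mul_min {θ x : ℝ} (hθ : 0 ≤ θ) (hx : 0 ≤ x) :
    compensatedExp (θ * x) ≤ max θ (θ ^ 2) * min x (x ^ 2) := by
  rcases le_total x 1 with h | h
  · rw [min_eq_right (by nlinarith)]
    calc compensatedExp (θ * x) ≤ θ ^ 2 * x ^ 2 :=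
          (compensatedExp_le_sq (by positivity)).trans_eq (by ring)
      _ ≤ _ := by gcongr; exact le_max_right _ _
  · rw [min_eq_left (by nlinarith)]
    calc compensatedExp (θ * x) ≤ θ * x := compensatedExp_le_self (by positivity)
      _ ≤ _ := by gcongr; exact le_max_left _ _

theorem compensatedExp_mul_div_sq_le_sq {θ x : ℝ} (hθ : 0 < θ) (hx : 0 ≤ x) :
    compensatedExp (θ * x) / θ ^ 2 ≤ x ^ 2 := by
  rw [div_le_iff₀ (by positivity)]
  exact (compensatedExp_le_sq (by positivity)).trans_eq (by ring)

theorem compensatedExp_mul_div_sq_le_div {θ x : ℝ} (hθ : 0 < θ) (hx : 0 ≤ x) :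
    compensatedExp (θ * x) / θ ^ 2 ≤ x / θ := by
  rw [div_le_div_iff₀ (by positivity) hθ]
  have := compensatedExp_le_self (mul_nonneg hθ.le hx)
  nlinarith

theorem div_le_compensatedExp_mul_div_sq {θ x : ℝ} (hθ : 0 < θ) (hθx : 2 ≤ θ * x) :
    x / 2 / θ ≤ compensatedExp (θ * x) / θ ^ 2 := by
  rw [div_le_div_iff₀ hθ (by positivity)]
  have := half_le_compensatedExp hθx
  nlinarith

noncomputable def compensatedExpIntegral (lam x : ℝ) : ℝ≥0∞ :=
  ∫⁻ θ in Ioc 0 lam, ENNReal.ofReal (compensatedExp (θ * x) / θ ^ 2)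

theorem compensatedExpIntegral_le_sq {lam x : ℝ} (hx : 0 ≤ x) :
    compensatedExpIntegral lam x ≤ ENNReal.ofReal (lam * x ^ 2) := by
  calc compensatedExpIntegral lam x ≤ ∫⁻ _ in Ioc 0 lam, ENNReal.ofReal (x ^ 2) :=
        setLIntegral_mono' measurableSet_Ioc fun θ hθ =>
          ENNReal.ofReal_le_ofReal (compensatedExp_mul_div_sq_le_sq hθ.1 hx)
    _ = ENNReal.ofReal (lam * x ^ 2) := by
        rw [setLIntegral_const, volume_Ioc, sub_zero, ← ENNReal.ofReal_mul (by positivity),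
          mul_comm]

theorem compensatedExpIntegral_le_add_mul_log {lam x : ℝ} (hx : 0 < x) (hlamx : 1 ≤ lam * x) :
    compensatedExpIntegral lam x ≤ ENNReal.ofReal (x + x * log (lam * x)) := by
  have hx' : 0 < 1 / x := by positivity
  have hle : 1 / x ≤ lam := by rwa [div_le_iff₀ hx]
  have hlog : 0 ≤ log (lam * x) := log_nonneg hlamx
  rw [compensatedExpIntegral, ← Ioc_union_Ioc_eq_Ioc hx'.le hle,
    lintegral_union measurableSet_Ioc (Ioc_disjoint_Ioc_of_le le_rfl),
    ENNReal.ofReal_add hx.le (by positivity)]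
  gcongr
  · calc compensatedExpIntegral (1 / x) x ≤ ENNReal.ofReal (1 / x * x ^ 2) :=
          compensatedExpIntegral_le_sq hx.le
      _ = ENNReal.ofReal x := by congr 1; field_simp
  · calc _ ≤ ∫⁻ θ in Ioc (1 / x) lam, ENNReal.ofReal (x / θ) :=
          setLIntegral_mono' measurableSet_Ioc fun θ hθ => ENNReal.ofReal_le_ofReal
            (compensatedExp_mul_div_sq_le_div (hx'.trans hθ.1) hx.le)
      _ = ENNReal.ofReal (x * log (lam * x)) := by
          rw [setLIntegral_Ioc_ofReal_div hx' hle hx.le, div_div_eq_mul_div, div_one]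

theorem ofReal_mul_log_le_compensatedExpIntegral {lam x : ℝ} (hx : 0 < x)
    (hlamx : 2 ≤ lam * x) :
    ENNReal.ofReal (x / 2 * log (lam * x / 2)) ≤ compensatedExpIntegral lam x := by
  have hx' : 0 < 2 / x := by positivity
  have hle : 2 / x ≤ lam := by rwa [div_le_iff₀ hx]
  calc ENNReal.ofReal (x / 2 * log (lam * x / 2))
      = ∫⁻ θ in Ioc (2 / x) lam, ENNReal.ofReal (x / 2 / θ) := by
        rw [setLIntegral_Ioc_ofReal_div hx' hle (by positivity), div_div_eq_mul_div]
    _ ≤ ∫⁻ θ in Ioc (2 / x) lam, ENNReal.ofReal (compensatedExp (θ * x) / θ ^ 2) :=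
        setLIntegral_mono' measurableSet_Ioc fun θ hθ => by
          refine ENNReal.ofReal_le_ofReal (div_le_compensatedExp_mul_div_sq (hx'.trans hθ.1) ?_)
          have := hθ.1
          rw [div_lt_iff₀ hx] at this
          exact this.le
    _ ≤ compensatedExpIntegral lam x := lintegral_mono_set (Ioc_subset_Ioc_left hx'.le)

theorem compensatedExpIntegral_le_ofReal_mul_log_add {lam x : ℝ} (hlam : 0 < lam) (hx : 1 < x) :
    compensatedExpIntegral lam x ≤
      ENNReal.ofReal (x * log x) + ENNReal.ofReal ((1 + |log lam|) * x) := by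
  have hx₀ : 0 < x := one_pos.trans hx
  rcases le_total (lam * x) 1 with hlamx | hlamx
  · calc compensatedExpIntegral lam x ≤ ENNReal.ofReal (lam * x ^ 2) :=
          compensatedExpIntegral_le_sq hx₀.le
      _ ≤ ENNReal.ofReal ((1 + |log lam|) * x) := ENNReal.ofReal_le_ofReal <| by
          nlinarith [abs_nonneg (log lam), mul_le_mul_of_nonneg_right hlamx hx₀.le]
      _ ≤ _ := le_add_self
  · calc compensatedExpIntegral lam x ≤ ENNReal.ofReal (x + x * log (lam * x)) :=
          compensatedExpIntegral_le_add_mul_log hx₀ hlamx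
      _ ≤ ENNReal.ofReal (x * log x + (1 + |log lam|) * x) := by
          refine ENNReal.ofReal_le_ofReal ?_
          rw [log_mul hlam.ne' hx₀.ne']
          nlinarith [mul_le_mul_of_nonneg_left (le_abs_self (log lam)) hx₀.le]
      _ ≤ _ := ENNReal.ofReal_add_le

theorem ofReal_mul_log_le_two_mul_compensatedExpIntegral_add {lam x : ℝ} (hlam : 0 < lam)
    (hx : 0 < x) :
    ENNReal.ofReal (x * log x) ≤
      2 * compensatedExpIntegral lam x + ENNReal.ofReal (|log (2 / lam)| * x) := by
  rcases lt_or_ge (lam * x) 2 with hlamx | hlamx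
  · refine le_add_left (ENNReal.ofReal_le_ofReal ?_)
    have : log x ≤ log (2 / lam) := log_le_log hx (by rw [le_div_iff₀ hlam]; linarith)
    nlinarith [le_abs_self (log (2 / lam))]
  · have hsplit : x * log x = 2 * (x / 2 * log (lam * x / 2)) + log (2 / lam) * x := by
      rw [log_div (by positivity) two_ne_zero, log_div two_ne_zero hlam.ne',
        log_mul hlam.ne' hx.ne']
      ring
    calc ENNReal.ofReal (x * log x)
        ≤ ENNReal.ofReal (2 * (x / 2 * log (lam * x / 2))) +
            ENNReal.ofReal (|log (2 / lam)| * x) := by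
          rw [hsplit]
          refine ENNReal.ofReal_add_le.trans ?_
          gcongr
          exact le_abs_self _
      _ ≤ 2 * compensatedExpIntegral lam x + ENNReal.ofReal (|log (2 / lam)| * x) := by
          rw [ENNReal.ofReal_mul zero_le_two, ENNReal.ofReal_ofNat]
          gcongr
          exact ofReal_mul_log_le_compensatedExpIntegral hx hlamx

theorem exists_bounds_compensatedExpIntegral_mul_log {lam : ℝ} (hlam : 0 < lam) :
    ∃ C : ℝ, ∀ x > 0,
      compensatedExpIntegral lam x ≤
          ENNReal.ofReal (x * log x) + ENNReal.ofReal (C * min x (x ^ 2)) ∧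
        ENNReal.ofReal (x * log x) ≤
          2 * compensatedExpIntegral lam x + ENNReal.ofReal (C * min x (x ^ 2)) := by
  refine ⟨lam + 1 + |log lam| + |log (2 / lam)|, fun x hx => ?_⟩
  have := abs_nonneg (log lam)
  have := abs_nonneg (log (2 / lam))
  rcases le_or_gt x 1 with hx1 | hx1
  · rw [min_eq_right (by nlinarith)]
    constructor
    · refine (compensatedExpIntegral_le_sq hx.le).trans (le_add_left ?_)
      exact ENNReal.ofReal_le_ofReal (by nlinarith)
    · rw [ENNReal.ofReal_of_nonpos (mul_nonpos_of_nonneg_of_nonpos hx.le (log_nonpos hx.le hx1))]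
      exact zero_le
  · rw [min_eq_left (by nlinarith)]
    constructor
    · refine (compensatedExpIntegral_le_ofReal_mul_log_add hlam hx1).trans
        (add_le_add le_rfl (ENNReal.ofReal_le_ofReal ?_))
      nlinarith
    · refine (ofReal_mul_log_le_two_mul_compensatedExpIntegral_add hlam hx).trans
        (add_le_add le_rfl (ENNReal.ofReal_le_ofReal ?_))
      nlinarith

theorem integrableOn_compensatedExp_mul {μ : Measure ℝ}
    (hμ : IntegrableOn (fun x => min x (x ^ 2)) (Ioi 0) μ) {θ : ℝ} (hθ : 0 ≤ θ) :
    IntegrableOn (fun x => compensatedExp (θ * x)) (Ioi 0) μ :=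
  (hμ.const_mul (max θ (θ ^ 2))).mono'
    (continuous_compensatedExp.comp (continuous_const_mul θ)).aestronglyMeasurable
    (ae_restrict_of_forall_mem measurableSet_Ioi fun x hx => by
      rw [norm_of_nonneg (compensatedExp_nonneg _)]
      exact compensatedExp_mul_le_max_mul_min hθ (le_of_lt hx))

theorem sigmaFinite_restrict_Ioi_zero {μ : Measure ℝ}
    (hμ : IntegrableOn (fun x => min x (x ^ 2)) (Ioi 0) μ) : SigmaFinite (μ.restrict (Ioi 0)) :=
  hμ.sigmaFinite_of_ae_ne_zero <| ae_restrict_of_forall_mem measurableSet_Ioi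
    fun x (hx : 0 < x) => (lt_min hx (by positivity)).ne'

noncomputable def branchingMechanism (μ : Measure ℝ) (γ θ : ℝ) : ℝ :=
  γ ^ 2 * θ ^ 2 + ∫ x in Ioi 0, compensatedExp (θ * x) ∂μ

theorem ofReal_branchingMechanism_div_sq {μ : Measure ℝ}
    (hμ : IntegrableOn (fun x => min x (x ^ 2)) (Ioi 0) μ) (γ : ℝ) {θ : ℝ} (hθ : 0 < θ) :
    ENNReal.ofReal (branchingMechanism μ γ θ / θ ^ 2) =
      ENNReal.ofReal (γ ^ 2) +
        ∫⁻ x in Ioi 0, ENNReal.ofReal (compensatedExp (θ * x) / θ ^ 2) ∂μ := by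
  have hint := (integrableOn_compensatedExp_mul hμ hθ.le).div_const (θ ^ 2)
  have hnn : 0 ≤ᵐ[μ.restrict (Ioi 0)] fun x => compensatedExp (θ * x) / θ ^ 2 :=
    ae_of_all _ fun x => div_nonneg (compensatedExp_nonneg _) (sq_nonneg θ)
  rw [← ofReal_integral_eq_lintegral_ofReal hint hnn,
    ← ENNReal.ofReal_add (sq_nonneg γ) (integral_nonneg_of_ae hnn), branchingMechanism,
    integral_div]
  congr 1
  field_simp

theorem setLIntegral_branchingMechanism_div_sq {μ : Measure ℝ}
    (hμ : IntegrableOn (fun x => min x (x ^ 2)) (Ioi 0) μ) (γ lam : ℝ) :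
    ∫⁻ θ in Ioc 0 lam, ENNReal.ofReal (branchingMechanism μ γ θ / θ ^ 2) =
      ENNReal.ofReal (γ ^ 2) * volume (Ioc 0 lam) +
        ∫⁻ x in Ioi 0, compensatedExpIntegral lam x ∂μ := by
  have := sigmaFinite_restrict_Ioi_zero hμ
  rw [setLIntegral_congr_fun measurableSet_Ioc fun θ hθ =>
      ofReal_branchingMechanism_div_sq hμ γ hθ.1,
    lintegral_add_left measurable_const, setLIntegral_const]
  congr 1
  refine lintegral_lintegral_swap (Measurable.aemeasurable ?_)
  exact ENNReal.measurable_ofReal.comp (continuous_compensatedExp.measurable.comp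
    (by fun_prop) |>.div (by fun_prop))

theorem setLIntegral_Ioi_one_ofReal_mul_log (μ : Measure ℝ) :
    ∫⁻ x in Ioi 1, ENNReal.ofReal (x * log x) ∂μ =
      ∫⁻ x in Ioi 0, ENNReal.ofReal (x * log x) ∂μ := by
  rw [← Ioc_union_Ioi_eq_Ioi zero_le_one, lintegral_union measurableSet_Ioi Ioc_disjoint_Ioi_same,
    setLIntegral_congr_fun measurableSet_Ioc (g := fun _ => 0) fun x hx => ENNReal.ofReal_of_nonpos
      (mul_nonpos_of_nonneg_of_nonpos hx.1.le (log_nonpos hx.1.le hx.2)),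
    lintegral_zero, zero_add]

theorem setLIntegral_branchingMechanism_div_sq_lt_top_iff {μ : Measure ℝ}
    (hμ : IntegrableOn (fun x => min x (x ^ 2)) (Ioi 0) μ) (γ : ℝ) {lam : ℝ} (hlam : 0 < lam) :
    ∫⁻ θ in Ioc 0 lam, ENNReal.ofReal (branchingMechanism μ γ θ / θ ^ 2) < ∞ ↔
      ∫⁻ x in Ioi 1, ENNReal.ofReal (x * log x) ∂μ < ∞ := by
  obtain ⟨C, hC⟩ := exists_bounds_compensatedExpIntegral_mul_log hlam
  have hdrift : ENNReal.ofReal (γ ^ 2) * volume (Ioc 0 lam) < ∞ :=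
    ENNReal.mul_lt_top ENNReal.ofReal_lt_top measure_Ioc_lt_top
  rw [setLIntegral_branchingMechanism_div_sq hμ, ENNReal.add_lt_top, and_iff_right hdrift,
    setLIntegral_Ioi_one_ofReal_mul_log]
  exact lintegral_lt_top_iff_of_le_add ENNReal.ofNat_ne_top (by fun_prop)
    (hμ.const_mul C).lintegral_lt_top
    (ae_restrict_of_forall_mem measurableSet_Ioi fun x hx => (hC x hx).1)
    (ae_restrict_of_forall_mem measurableSet_Ioi fun x hx => (hC x hx).2)

theorem stmt_16_general (μ : Measure ℝ) (γ : ℝ)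
    (hμ : IntegrableOn (fun x => min x (x ^ 2)) (Set.Ioi 0) μ)
    (ψ₀ : ℝ → ℝ)
    (hψ : ∀ θ, ψ₀ θ = γ ^ 2 * θ ^ 2 +
      ∫ x in Set.Ioi (0:ℝ), (Real.exp (-θ * x) - 1 + θ * x) ∂μ) :
    ∀ lam > (0:ℝ),
      ((∫⁻ θ in Set.Ioc (0:ℝ) lam, ENNReal.ofReal (ψ₀ θ / θ ^ 2)) < ⊤ ↔
        (∫⁻ x in Set.Ioi (1:ℝ), ENNReal.ofReal (x * Real.log x) ∂μ) < ⊤) := by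
  have hψ₀ : ψ₀ = branchingMechanism μ γ := funext fun θ => by
    simp only [hψ, branchingMechanism, compensatedExp, neg_mul]
  subst hψ₀
  exact fun lam hlam => setLIntegral_branchingMechanism_div_sq_lt_top_iff hμ γ hlam

theorem stmt_16 (μ : Measure ℝ) (γ : ℝ) (hγ : 0 ≤ γ)
    (hμ : IntegrableOn (fun x => min x (x ^ 2)) (Set.Ioi 0) μ)
    (ψ₀ : ℝ → ℝ)
    (hψ : ∀ θ, ψ₀ θ = γ ^ 2 * θ ^ 2 +
      ∫ x in Set.Ioi (0:ℝ), (Real.exp (-θ * x) - 1 + θ * x) ∂μ) :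
    ∀ lam > (0:ℝ),
      ((∫⁻ θ in Set.Ioc (0:ℝ) lam, ENNReal.ofReal (ψ₀ θ / θ ^ 2)) < ⊤ ↔
        (∫⁻ x in Set.Ioi (1:ℝ), ENNReal.ofReal (x * Real.log x) ∂μ) < ⊤) :=
  stmt_16_general μ γ hμ ψ₀ hψ
end
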